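/- arXiv:0909.4320 — 2 statements merged into one kernel-verified Lean document; each statement's English description precedes it below -/
import Mathlib

section
/- Let (Ωᵢ, μᵢ), i = 1,…,L, be finite probability spaces with each μᵢ positive, πᵢ probability measures on Ωᵢ, and suppose ‖πᵢ − μᵢ‖²_{L²(μᵢ)} ≤ m² for all i. Then the total-variation distance between the product measures satisfies ‖⊗πᵢ − ⊗μᵢ‖_TV ≤ (1/2) (exp(L·m²) − 1)^{1/2}. -/
/-!
The χ²-divergence `∑ (p - q)² / q` equals `∑ p² / q - 1`, and `∑ p² / q` factorises over product
measures, so `χ²(⊗πᵢ, ⊗μᵢ) + 1 = ∏ (χ²(πᵢ, μᵢ) + 1) ≤ ∏ exp (m²) = exp (L m²)`. Cauchy–Schwarz with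
weights `q` bounds `(∑ |p - q|)²` by `χ²(p, q)` whenever `∑ q = 1`.
-/

open Finset

/-- The squared distance `‖p - q‖²_{L²(q)}`, i.e. the χ²-divergence of `p` from `q`. -/
noncomputable def chiSq {α : Type*} [Fintype α] (p q : α → ℝ) : ℝ :=
  ∑ x, (p x - q x) ^ 2 / q x

section ChiSq

variable {α : Type*} [Fintype α] {p q : α → ℝ}

lemma chiSq_nonneg (hq : ∀ x, 0 ≤ q x) : 0 ≤ chiSq p q :=
  sum_nonneg fun x _ => div_nonneg (sq_nonneg _) (hq x)

lemma chiSq_add_one (hq : ∀ x, q x ≠ 0) (hp1 : ∑ x, p x = 1) (hq1 : ∑ x, q x = 1) :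
    chiSq p q + 1 = ∑ x, p x ^ 2 / q x := by
  have expand : ∀ x, (p x - q x) ^ 2 / q x = p x ^ 2 / q x - 2 * p x + q x := fun x => by
    field_simp [hq x]
    ring
  simp only [chiSq, expand, sum_add_distrib, sum_sub_distrib, ← mul_sum, hp1, hq1]
  ring

lemma sq_sum_abs_sub_le_chiSq (hq : ∀ x, 0 < q x) (hq1 : ∑ x, q x = 1) :
    (∑ x, |p x - q x|) ^ 2 ≤ chiSq p q := by
  simpa only [chiSq, hq1, div_one, sq_abs] using
    sq_sum_div_le_sum_sq_div univ (fun x => |p x - q x|) (fun x _ => hq x)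

end ChiSq

section Pi

variable {ι : Type*} [Fintype ι] [DecidableEq ι] {Ω : ι → Type*} [∀ i, Fintype (Ω i)]
  {p q : ∀ i, Ω i → ℝ}

lemma sum_pi_prod_eq_one (hp1 : ∀ i, ∑ y, p i y = 1) :
    ∑ x : ∀ i, Ω i, ∏ i, p i (x i) = 1 := by
  simp [← Fintype.prod_sum, hp1]

lemma chiSq_pi_add_one (hq : ∀ i y, q i y ≠ 0) (hp1 : ∀ i, ∑ y, p i y = 1)
    (hq1 : ∀ i, ∑ y, q i y = 1) :
    chiSq (fun x : ∀ i, Ω i => ∏ i, p i (x i)) (fun x => ∏ i, q i (x i)) + 1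
      = ∏ i, (chiSq (p i) (q i) + 1) := by
  rw [chiSq_add_one (fun x => prod_ne_zero_iff.2 fun i _ => hq i (x i))
    (sum_pi_prod_eq_one hp1) (sum_pi_prod_eq_one hq1)]
  simp only [fun i => chiSq_add_one (hq i) (hp1 i) (hq1 i), Fintype.prod_sum, ← prod_pow,
    ← prod_div_distrib]

end Pi

theorem tv_product_le_general
    {L : ℕ} (Ω : Fin L → Type) [∀ i, Fintype (Ω i)]
    (π μ : ∀ i, Ω i → ℝ) (m : ℝ)
    (hπ1 : ∀ i, ∑ x, π i x = 1)
    (hμ0 : ∀ i x, 0 < μ i x) (hμ1 : ∀ i, ∑ x, μ i x = 1)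
    (hm : ∀ i, ∑ y, (π i y - μ i y)^2 / μ i y ≤ m^2) :
    (1/2) * ∑ x : ∀ i, Ω i, |(∏ i, π i (x i)) - (∏ i, μ i (x i))|
      ≤ (1/2) * Real.sqrt (Real.exp (L * m^2) - 1) := by
  have hfactor : ∀ i, chiSq (π i) (μ i) + 1 ≤ Real.exp (m ^ 2) := fun i =>
    (add_le_add_left (hm i) 1).trans (Real.add_one_le_exp _)
  have hchi : chiSq (fun x : ∀ i, Ω i => ∏ i, π i (x i)) (fun x => ∏ i, μ i (x i)) + 1
      ≤ Real.exp (L * m ^ 2) :=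
    calc _ = ∏ i, (chiSq (π i) (μ i) + 1) :=
          chiSq_pi_add_one (fun i y => (hμ0 i y).ne') hπ1 hμ1
      _ ≤ ∏ _i : Fin L, Real.exp (m ^ 2) :=
          prod_le_prod (fun i _ => by linarith [chiSq_nonneg (p := π i) fun y => (hμ0 i y).le])
            fun i _ => hfactor i
      _ = Real.exp (L * m ^ 2) := by simp [← Real.exp_nat_mul]
  have hCS := sq_sum_abs_sub_le_chiSq (p := fun x : ∀ i, Ω i => ∏ i, π i (x i))
    (fun x => prod_pos fun i _ => hμ0 i (x i)) (sum_pi_prod_eq_one hμ1)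
  gcongr
  exact Real.le_sqrt_of_sq_le (by linarith)

/-- If each ‖πᵢ − μᵢ‖²_{L²(μᵢ)} ≤ m², then the total-variation distance of the
product measures is at most (1/2)(exp(L·m²) − 1)^{1/2}. -/
theorem tv_product_le
    {L : ℕ} (Ω : Fin L → Type) [∀ i, Fintype (Ω i)]
    (π μ : ∀ i, Ω i → ℝ) (m : ℝ)
    (hπ0 : ∀ i x, 0 ≤ π i x) (hπ1 : ∀ i, ∑ x, π i x = 1)
    (hμ0 : ∀ i x, 0 < μ i x) (hμ1 : ∀ i, ∑ x, μ i x = 1)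
    (hm : ∀ i, ∑ y, (π i y - μ i y)^2 / μ i y ≤ m^2) :
    (1/2) * ∑ x : ∀ i, Ω i, |(∏ i, π i (x i)) - (∏ i, μ i (x i))|
      ≤ (1/2) * Real.sqrt (Real.exp (L * m^2) - 1) :=
  tv_product_le_general Ω π μ m hπ1 hμ0 hμ1 hm
end

section
/- Let λ : ℕ → ℝ be a bounded function and δ ∈ (0, 1/2) such that |λ(r₁) − λ(r₂)| ≤ r₁^{−1/2+δ} for all sufficiently large r₁ and all r₂ with r₁ < r₂ ≤ r₁². Then λ(r) converges to a limit λ̂ as r → ∞, and |λ(r) − λ̂| ≤ 3 r^{−1/2+δ} for all sufficiently large r. -/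
/-!
Since the admissible window `(r, r²]` squares at each step, any `s ≥ r` is reached from `r` by
jumping along `r, r², r⁴, …` and then once inside a window. With `ε r = r^(-1/2+δ)` we have
`ε (r²) = (ε r)²`, so the jumps cost `ε r + 2 (ε r)² ≤ 2 ε r` once `ε r ≤ 1/2`. The sequence is
then Cauchy, and the bound `2 ε r` passes to the limit.
-/

open Filter Topology

section

variable {α : Type*} [PseudoMetricSpace α] {u : ℕ → α} {ε : ℕ → ℝ} {M : ℕ}

theorem dist_le_two_mul_of_dist_le_of_le_sq (hM : 2 ≤ M)
    (hε : ∀ r ≥ M, ε r ≤ 1 / 2 ∧ ε (r ^ 2) ≤ ε r ^ 2 ∧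
      ∀ s, r < s → s ≤ r ^ 2 → dist (u r) (u s) ≤ ε r)
    (r : ℕ) (hr : M ≤ r) (s : ℕ) (hrs : r ≤ s) :
    dist (u r) (u s) ≤ 2 * ε r := by
  obtain ⟨hhalf, hsq, hstep⟩ := hε r hr
  have hr_lt_sq : r < r ^ 2 := by nlinarith
  have hε_nonneg : 0 ≤ ε r :=
    dist_nonneg.trans (hstep (r + 1) (by omega) (by nlinarith))
  rcases le_or_gt s (r ^ 2) with hs | hs
  · rcases hrs.eq_or_lt with rfl | hlt
    · simpa using hε_nonneg
    · linarith [hstep s hlt hs]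
  · have hfar := dist_le_two_mul_of_dist_le_of_le_sq hM hε (r ^ 2) (hr.trans hr_lt_sq.le) s hs.le
    calc dist (u r) (u s) ≤ dist (u r) (u (r ^ 2)) + dist (u (r ^ 2)) (u s) := dist_triangle _ _ _
      _ ≤ ε r + 2 * ε r ^ 2 := add_le_add (hstep _ hr_lt_sq le_rfl) (by linarith)
      _ ≤ 2 * ε r := by nlinarith
termination_by s - r

theorem eventually_dist_le_two_mul_of_dist_le_of_le_sq
    (hε : ∀ᶠ r in atTop, ε r ≤ 1 / 2 ∧ ε (r ^ 2) ≤ ε r ^ 2 ∧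
      ∀ s, r < s → s ≤ r ^ 2 → dist (u r) (u s) ≤ ε r) :
    ∀ᶠ r in atTop, ∀ s ≥ r, dist (u r) (u s) ≤ 2 * ε r := by
  obtain ⟨N, hN⟩ := eventually_atTop.mp hε
  filter_upwards [eventually_ge_atTop (max N 2)] with r hr s hrs
  exact dist_le_two_mul_of_dist_le_of_le_sq (le_max_right N 2)
    (fun r hr ↦ hN r ((le_max_left N 2).trans hr)) r hr s hrs

theorem exists_tendsto_dist_le_of_eventually_dist_le [CompleteSpace α] {b : ℕ → ℝ}
    (hb : Tendsto b atTop (𝓝 0)) (hu : ∀ᶠ r in atTop, ∀ s ≥ r, dist (u r) (u s) ≤ b r) :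
    ∃ a, Tendsto u atTop (𝓝 a) ∧ ∀ᶠ r in atTop, dist (u r) a ≤ b r := by
  have hcauchy : CauchySeq u := by
    refine Metric.cauchySeq_iff'.mpr fun e he ↦ ?_
    obtain ⟨N, hN⟩ := (hu.and (hb.eventually_lt_const he)).exists_forall_of_atTop
    exact ⟨N, fun n hn ↦ by rw [dist_comm]; exact ((hN N le_rfl).1 n hn).trans_lt (hN N le_rfl).2⟩
  obtain ⟨a, ha⟩ := cauchySeq_tendsto_of_complete hcauchy
  refine ⟨a, ha, hu.mono fun r hr ↦ ?_⟩
  exact le_of_tendsto (tendsto_const_nhds.dist ha) (eventually_atTop.mpr ⟨r, hr⟩)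

end

theorem spectral_gap_convergence_rate_general
    (lam : ℕ → ℝ)
    (δ : ℝ) (hδ1 : δ < 1/2)
    (h : ∀ᶠ r₁ in atTop, ∀ r₂ : ℕ, r₁ < r₂ → r₂ ≤ r₁^2 →
        |lam r₁ - lam r₂| ≤ (r₁ : ℝ)^(-(1:ℝ)/2 + δ)) :
    ∃ lamhat : ℝ, Tendsto lam atTop (nhds lamhat) ∧
      ∀ᶠ r in atTop, |lam r - lamhat| ≤ 3 * (r : ℝ)^(-(1:ℝ)/2 + δ) := by
  set η : ℝ := -(1:ℝ)/2 + δ with hη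
  have hη_neg : η < 0 := by linarith
  have hrate : Tendsto (fun r : ℕ ↦ (r : ℝ) ^ η) atTop (𝓝 0) := by
    simpa only [neg_neg, Function.comp_def] using
      (tendsto_rpow_neg_atTop (neg_pos.mpr hη_neg)).comp tendsto_natCast_atTop_atTop
  have hrate_sq (r : ℕ) : ((r ^ 2 : ℕ) : ℝ) ^ η = ((r : ℝ) ^ η) ^ 2 := by
    rw [Nat.cast_pow, ← Real.rpow_natCast, ← Real.rpow_natCast, ← Real.rpow_mul r.cast_nonneg,
      ← Real.rpow_mul r.cast_nonneg, mul_comm]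
  have hstep : ∀ᶠ r : ℕ in atTop, (r : ℝ) ^ η ≤ 1 / 2 ∧ ((r ^ 2 : ℕ) : ℝ) ^ η ≤ ((r : ℝ) ^ η) ^ 2 ∧
      ∀ s, r < s → s ≤ r ^ 2 → dist (lam r) (lam s) ≤ (r : ℝ) ^ η := by
    filter_upwards [hrate.eventually_le_const one_half_pos, h] with r hhalf hr
    exact ⟨hhalf, (hrate_sq r).le, fun s hrs hs ↦ (Real.dist_eq _ _).trans_le (hr s hrs hs)⟩
  obtain ⟨lamhat, hlim, hdist⟩ := exists_tendsto_dist_le_of_eventually_dist_le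
    (by simpa using hrate.const_mul 2) (eventually_dist_le_two_mul_of_dist_le_of_le_sq hstep)
  refine ⟨lamhat, hlim, hdist.mono fun r hr ↦ ?_⟩
  have : 0 ≤ (r : ℝ) ^ η := Real.rpow_nonneg r.cast_nonneg η
  rw [← Real.dist_eq]
  linarith

/-- If λ : ℕ → ℝ is bounded and |λ(r₁) − λ(r₂)| ≤ r₁^{−1/2+δ} for all large r₁
and all r₁ < r₂ ≤ r₁², then λ(r) converges to a limit λ̂ with |λ(r) − λ̂| ≤ 3 r^{−1/2+δ}
for all sufficiently large r. -/
theorem spectral_gap_convergence_rate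
    (lam : ℕ → ℝ) (C : ℝ) (hbdd : ∀ r, |lam r| ≤ C)
    (δ : ℝ) (hδ0 : 0 < δ) (hδ1 : δ < 1/2)
    (h : ∀ᶠ r₁ in atTop, ∀ r₂ : ℕ, r₁ < r₂ → r₂ ≤ r₁^2 →
        |lam r₁ - lam r₂| ≤ (r₁ : ℝ)^(-(1:ℝ)/2 + δ)) :
    ∃ lamhat : ℝ, Tendsto lam atTop (nhds lamhat) ∧
      ∀ᶠ r in atTop, |lam r - lamhat| ≤ 3 * (r : ℝ)^(-(1:ℝ)/2 + δ) :=
  spectral_gap_convergence_rate_general lam δ hδ1 h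
end
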